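/- Let Λ_n denote the Wajsberg chain Γ(ℤ, n) with n+1 elements and let S be the Wajsberg chain Γ(X, n) where X is the dense subgroup of ℝ generated by 1 and a fixed irrational α. Then Λ_k embeds into S if and only if k divides n. -/

import Mathlib

/-!
An embedding `f` of `Λ_k` into `Γ(G, u)` sends `k = 0 → 0` to `u`, and the implication
`i → (i - 1) = k - 1` shows that consecutive values of `f` differ by the constant
`u - f (k - 1)` (the other branch of the `min` would make `f (k - 1) = f k`). So `f` is the
progression `i ↦ i • f 1` with `k • f 1 = u`. In `S`, `f 1 = a + b α` and `k (a + b α) = n`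
force `b = 0` by irrationality, hence `k ∣ n`. Conversely `i ↦ (n / k) i` is an embedding.
-/

namespace Wajsberg

variable {G : Type*} [AddCommGroup G] [LinearOrder G]

/-- `Λ_k` is encoded as the integers in `[0, k]`; values of `f` outside it play no role. -/
def PreservesImp (k : ℕ) (u : G) (f : ℤ → G) : Prop :=
  ∀ i j : ℤ, 0 ≤ i → i ≤ (k : ℤ) → 0 ≤ j → j ≤ (k : ℤ) →
    f (min ((k : ℤ) - i + j) (k : ℤ)) = min (u - f i + f j) u

def PreservesMul (k : ℕ) (u : G) (f : ℤ → G) : Prop :=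
  ∀ i j : ℤ, 0 ≤ i → i ≤ (k : ℤ) → 0 ≤ j → j ≤ (k : ℤ) →
    f (max (i + j - (k : ℤ)) 0) = max (f i + f j - u) 0

namespace PreservesImp

variable {k : ℕ} {u : G} {f : ℤ → G}

theorem map_natCast (hf : PreservesImp k u f) (h0 : f 0 = 0) : f k = u := by
  simpa [h0] using hf 0 0 le_rfl (Int.natCast_nonneg k) le_rfl (Int.natCast_nonneg k)

theorem map_eq_map_sub_one_add (hf : PreservesImp k u f) (h0 : f 0 = 0)
    (hinj : Set.InjOn f (Set.Icc 0 k)) {i : ℤ} (hi1 : 1 ≤ i) (hik : i ≤ k) :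
    f i = f (i - 1) + (u - f (k - 1)) := by
  have h := hf i (i - 1) (by omega) hik (by omega) (by omega)
  rw [show min ((k : ℤ) - i + (i - 1)) k = k - 1 by omega] at h
  rcases le_total (u - f i + f (i - 1)) u with hle | hge
  · rw [min_eq_left hle] at h
    rw [h]
    abel
  · rw [min_eq_right hge, ← hf.map_natCast h0] at h
    have := hinj ⟨by omega, by omega⟩ ⟨by omega, le_rfl⟩ h
    omega

theorem map_eq_zsmul (hf : PreservesImp k u f) (h0 : f 0 = 0)
    (hinj : Set.InjOn f (Set.Icc 0 k)) {i : ℤ} (hi0 : 0 ≤ i) (hik : i ≤ k) :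
    f i = i • (u - f (k - 1)) := by
  lift i to ℕ using hi0
  induction i with
  | zero => simpa using h0
  | succ m ih =>
    push_cast at hik ⊢
    rw [hf.map_eq_map_sub_one_add h0 hinj (by omega) hik, add_sub_cancel_right,
      ih (by omega), add_zsmul, one_zsmul]

theorem nsmul_map_one (hf : PreservesImp k u f) (h0 : f 0 = 0)
    (hinj : Set.InjOn f (Set.Icc 0 k)) (hk : k ≠ 0) : k • f 1 = u := by
  rw [← hf.map_natCast h0, hf.map_eq_zsmul h0 hinj (Int.natCast_nonneg k) le_rfl,
    hf.map_eq_zsmul h0 hinj zero_le_one (by omega), one_zsmul, natCast_zsmul]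

end PreservesImp

variable [IsOrderedAddMonoid G] {c : G}

theorem preservesImp_zsmul (k : ℕ) (hc : 0 ≤ c) : PreservesImp k ((k : ℤ) • c) (· • c) := by
  intro i j _ _ _ _
  dsimp only
  rw [(zsmul_left_mono hc).map_min, add_zsmul, sub_zsmul]
  abel_nf

theorem preservesMul_zsmul (k : ℕ) (hc : 0 ≤ c) : PreservesMul k ((k : ℤ) • c) (· • c) := by
  intro i j _ _ _ _
  dsimp only
  rw [(zsmul_left_mono hc).map_max, sub_zsmul, add_zsmul, zero_zsmul, sub_eq_add_neg]

end Wajsberg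

theorem Irrational.dvd_of_mul_intCast_add_mul_eq {α : ℝ} (hα : Irrational α) {k n a b : ℤ}
    (hk : k ≠ 0) (h : k * (a + b * α) = n) : k ∣ n := by
  have hb : b = 0 := by
    by_contra hb
    refine hα.ne_rat ((n - k * a) / (k * b)) ?_
    push_cast
    field_simp
    linear_combination h
  subst hb
  exact ⟨a, by exact_mod_cast (by simpa using h : (k : ℝ) * a = n).symm⟩

theorem wajsberg_chain_embeds_iff_dvd_general (α : ℝ) (hα : Irrational α)
    (k n : ℕ) (hn : 0 < n) :
    (∃ f : ℤ → ℝ,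
      (∀ i : ℤ, 0 ≤ i → i ≤ (k : ℤ) →
        (∃ a b : ℤ, f i = (a : ℝ) + (b : ℝ) * α) ∧ 0 ≤ f i ∧ f i ≤ (n : ℝ)) ∧
      (∀ i j : ℤ, 0 ≤ i → i ≤ (k : ℤ) → 0 ≤ j → j ≤ (k : ℤ) → f i = f j → i = j) ∧
      f 0 = 0 ∧
      (∀ i j : ℤ, 0 ≤ i → i ≤ (k : ℤ) → 0 ≤ j → j ≤ (k : ℤ) →
        f (max (i + j - (k : ℤ)) 0) = max (f i + f j - (n : ℝ)) 0) ∧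
      (∀ i j : ℤ, 0 ≤ i → i ≤ (k : ℤ) → 0 ≤ j → j ≤ (k : ℤ) →
        f (min ((k : ℤ) - i + j) (k : ℤ)) = min ((n : ℝ) - f i + f j) (n : ℝ))) ↔
    k ∣ n := by
  constructor
  · rintro ⟨f, hmem, hinj, h0, -, himp⟩
    have hinj' : Set.InjOn f (Set.Icc 0 k) := fun i hi j hj => hinj i j hi.1 hi.2 hj.1 hj.2
    have hk : k ≠ 0 := by
      rintro rfl
      have h0n : (0 : ℝ) = n := by simpa [h0] using Wajsberg.PreservesImp.map_natCast himp h0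
      exact hn.ne (by exact_mod_cast h0n)
    obtain ⟨⟨a, b, hab⟩, -, -⟩ := hmem 1 zero_le_one (by omega)
    have hkn := Wajsberg.PreservesImp.nsmul_map_one himp h0 hinj' hk
    rw [hab, nsmul_eq_mul] at hkn
    exact Int.natCast_dvd_natCast.mp <|
      hα.dvd_of_mul_intCast_add_mul_eq (by omega) (by exact_mod_cast hkn)
  · rintro ⟨m, rfl⟩
    have hm : (0 : ℝ) < m := by exact_mod_cast Nat.pos_of_mul_pos_left hn
    have hu : ((k * m : ℕ) : ℝ) = (k : ℤ) • (m : ℝ) := by simp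
    refine ⟨(· • (m : ℝ)), fun i hi0 hik => ⟨⟨m * i, 0, by simp [mul_comm]⟩, ?_, ?_⟩,
      fun i j _ _ _ _ h => (zsmul_left_strictMono hm).injective h, zero_zsmul _, ?_, ?_⟩
    · positivity
    · rw [hu]; exact zsmul_left_mono hm.le hik
    · rw [hu]; exact Wajsberg.preservesMul_zsmul k hm.le
    · rw [hu]; exact Wajsberg.preservesImp_zsmul k hm.le

/-- Let `Λ_k = Γ(ℤ, k)` be the Wajsberg chain with `k+1` elements `{0,…,k}` with
`x·y = max(x+y-k, 0)` and `x → y = min(k-x+y, k)`, and let `S = Γ(X, n)` where `X`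
is the dense subgroup of `ℝ` generated by `1` and a fixed irrational `α`, i.e. the
interval `{x ∈ X : 0 ≤ x ≤ n}` with `x·y = max(x+y-n, 0)` and
`x → y = min(n-x+y, n)`. Then `Λ_k` embeds into `S` (via an injective map preserving
`0` and the MV-operations) if and only if `k` divides `n`. -/
theorem wajsberg_chain_embeds_iff_dvd (α : ℝ) (hα : Irrational α)
    (k n : ℕ) (hk : 0 < k) (hn : 0 < n) :
    (∃ f : ℤ → ℝ,
      (∀ i : ℤ, 0 ≤ i → i ≤ (k : ℤ) →
        (∃ a b : ℤ, f i = (a : ℝ) + (b : ℝ) * α) ∧ 0 ≤ f i ∧ f i ≤ (n : ℝ)) ∧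
      (∀ i j : ℤ, 0 ≤ i → i ≤ (k : ℤ) → 0 ≤ j → j ≤ (k : ℤ) → f i = f j → i = j) ∧
      f 0 = 0 ∧
      (∀ i j : ℤ, 0 ≤ i → i ≤ (k : ℤ) → 0 ≤ j → j ≤ (k : ℤ) →
        f (max (i + j - (k : ℤ)) 0) = max (f i + f j - (n : ℝ)) 0) ∧
      (∀ i j : ℤ, 0 ≤ i → i ≤ (k : ℤ) → 0 ≤ j → j ≤ (k : ℤ) →
        f (min ((k : ℤ) - i + j) (k : ℤ)) = min ((n : ℝ) - f i + f j) (n : ℝ))) ↔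
    k ∣ n :=
  wajsberg_chain_embeds_iff_dvd_general α hα k n hn
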